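/- Every vertex of the 24-cell lies in exactly two facets of each colour: for every v ∈ V, the sets {w ∈ G : ⟪v, w⟫ = 1}, {w ∈ R : ⟪v, w⟫ = 1} and {w ∈ B : ⟪v, w⟫ = 1} each have exactly 2 elements. -/
import Mathlib


open scoped RealInnerProductSpace Pointwise

/-- The `i`-th standard basis vector of `EuclideanSpace ℝ (Fin 4)`. -/
noncomputable def stdV (i : Fin 4) : EuclideanSpace ℝ (Fin 4) :=
  EuclideanSpace.single i (1 : ℝ)

/-- The 24 vertices of the 24-cell: all permutations of the coordinates of `(±1, ±1, 0, 0)`. -/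
def cellV : Set (EuclideanSpace ℝ (Fin 4)) :=
  {x | ∃ i j : Fin 4, i ≠ j ∧ ∃ ε δ : ℝ, (ε = 1 ∨ ε = -1) ∧ (δ = 1 ∨ δ = -1) ∧
    x = ε • stdV i + δ • stdV j}

/-- The 8 green vectors `±eᵢ`. -/
def colG : Set (EuclideanSpace ℝ (Fin 4)) :=
  {x | ∃ i : Fin 4, x = stdV i ∨ x = -stdV i}

/-- The 8 red vectors `(±1/2, ±1/2, ±1/2, ±1/2)` with an even number of minus signs. -/
def colR : Set (EuclideanSpace ℝ (Fin 4)) :=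
  {x | ∃ ε : Fin 4 → ℝ, (∀ i, ε i = 1 ∨ ε i = -1) ∧ (∏ i, ε i) = 1 ∧ ∀ i, x i = ε i / 2}

/-- The 8 blue vectors `(±1/2, ±1/2, ±1/2, ±1/2)` with an odd number of minus signs. -/
def colB : Set (EuclideanSpace ℝ (Fin 4)) :=
  {x | ∃ ε : Fin 4 → ℝ, (∀ i, ε i = 1 ∨ ε i = -1) ∧ (∏ i, ε i) = -1 ∧ ∀ i, x i = ε i / 2}

/-- The polar of a subset of `EuclideanSpace ℝ (Fin 4)`. -/
def polarSet (S : Set (EuclideanSpace ℝ (Fin 4))) : Set (EuclideanSpace ℝ (Fin 4)) :=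
  {y | ∀ x ∈ S, ⟪x, y⟫ ≤ 1}


lemma stdV_apply (i m : Fin 4) : stdV i m = if m = i then 1 else 0 :=
  EuclideanSpace.single_apply i 1 m

lemma inner_v (i j : Fin 4) (ε δ : ℝ) (w : EuclideanSpace ℝ (Fin 4)) :
    ⟪ε • stdV i + δ • stdV j, w⟫ = ε * w i + δ * w j := by
  simp [stdV, inner_add_left, real_inner_smul_left, EuclideanSpace.inner_single_left]

lemma exists_compl : ∀ i j : Fin 4, i ≠ j → ∃ k l : Fin 4, i ≠ k ∧ i ≠ l ∧ j ≠ k ∧ j ≠ l ∧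
    k ≠ l ∧ ∀ m : Fin 4, m = i ∨ m = j ∨ m = k ∨ m = l := by decide

lemma green_card (i j : Fin 4) (hij : i ≠ j) (ε δ : ℝ)
    (hε : ε = 1 ∨ ε = -1) (hδ : δ = 1 ∨ δ = -1) :
    ({w ∈ colG | ⟪ε • stdV i + δ • stdV j, w⟫ = 1}).ncard = 2 := by
  have hset : {w ∈ colG | ⟪ε • stdV i + δ • stdV j, w⟫ = 1}
      = {ε • stdV i, δ • stdV j} := by
    ext w
    simp only [Set.mem_setOf_eq, Set.mem_insert_iff, Set.mem_singleton_iff]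
    constructor
    · rintro ⟨⟨m, rfl | rfl⟩, h1⟩
      · rw [inner_v, stdV_apply, stdV_apply] at h1
        rcases eq_or_ne i m with rfl | him
        · simp [hij.symm] at h1
          left; rw [h1, one_smul]
        · rcases eq_or_ne j m with rfl | hjm
          · simp [him] at h1
            right; rw [h1, one_smul]
          · simp [him, hjm] at h1
      · rw [inner_v] at h1
        simp only [PiLp.neg_apply, stdV_apply] at h1
        rcases eq_or_ne i m with rfl | him
        · simp [hij.symm] at h1
          left; rw [show ε = -1 by linarith, neg_one_smul]
        · rcases eq_or_ne j m with rfl | hjm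
          · simp [him] at h1
            right; rw [show δ = -1 by linarith, neg_one_smul]
          · simp [him, hjm] at h1
    · rintro (rfl | rfl)
      · refine ⟨⟨i, ?_⟩, ?_⟩
        · rcases hε with rfl | rfl
          · left; rw [one_smul]
          · right; rw [neg_one_smul]
        · rw [inner_v]
          simp only [PiLp.smul_apply, stdV_apply, smul_eq_mul]
          rcases hε with rfl | rfl <;> simp [hij.symm]
      · refine ⟨⟨j, ?_⟩, ?_⟩
        · rcases hδ with rfl | rfl
          · left; rw [one_smul]
          · right; rw [neg_one_smul]
        · rw [inner_v]
          simp only [PiLp.smul_apply, stdV_apply, smul_eq_mul]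
          rcases hδ with rfl | rfl <;> simp [hij]
  rw [hset]
  refine Set.ncard_pair ?_
  intro h
  have h2 : (ε • stdV i) i = (δ • stdV j) i := by rw [h]
  simp only [PiLp.smul_apply, stdV_apply, smul_eq_mul, if_pos rfl, if_neg hij] at h2
  rcases hε with rfl | rfl <;> norm_num at h2

def sgnFun (i j k : Fin 4) (a b c d : ℝ) : Fin 4 → ℝ :=
  fun m => if m = i then a else if m = j then b else if m = k then c else d

noncomputable def sgnVec (i j k : Fin 4) (a b c d : ℝ) : EuclideanSpace ℝ (Fin 4) :=
  (WithLp.equiv 2 (Fin 4 → ℝ)).symm fun m => sgnFun i j k a b c d m / 2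

lemma sgnVec_apply (i j k : Fin 4) (a b c d : ℝ) (m : Fin 4) :
    sgnVec i j k a b c d m = sgnFun i j k a b c d m / 2 := rfl

lemma prod4 (i j k l : Fin 4) (hij : i ≠ j) (hik : i ≠ k) (hil : i ≠ l) (hjk : j ≠ k)
    (hjl : j ≠ l) (hkl : k ≠ l) (hall : ∀ m : Fin 4, m = i ∨ m = j ∨ m = k ∨ m = l)
    (η : Fin 4 → ℝ) : (∏ m, η m) = η i * (η j * (η k * η l)) := by
  have huniv : (Finset.univ : Finset (Fin 4)) = {i, j, k, l} := by
    ext m; simpa using hall m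
  rw [huniv, Finset.prod_insert (by simp [hij, hik, hil]),
    Finset.prod_insert (by simp [hjk, hjl]), Finset.prod_insert (by simp [hkl]),
    Finset.prod_singleton]

lemma rb_card (i j k l : Fin 4) (hij : i ≠ j) (hik : i ≠ k) (hil : i ≠ l) (hjk : j ≠ k)
    (hjl : j ≠ l) (hkl : k ≠ l) (hall : ∀ m : Fin 4, m = i ∨ m = j ∨ m = k ∨ m = l)
    (ε δ s : ℝ) (hε : ε = 1 ∨ ε = -1) (hδ : δ = 1 ∨ δ = -1) (hs : s = 1 ∨ s = -1) :
    ({w | (∃ η : Fin 4 → ℝ, (∀ m, η m = 1 ∨ η m = -1) ∧ (∏ m, η m) = s ∧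
        ∀ m, w m = η m / 2) ∧ ⟪ε • stdV i + δ • stdV j, w⟫ = 1}
      : Set (EuclideanSpace ℝ (Fin 4))).ncard = 2 := by
  set w1 := sgnVec i j k ε δ 1 (s * (ε * δ)) with hw1
  set w2 := sgnVec i j k ε δ (-1) (-(s * (ε * δ))) with hw2
  have hset : ({w | (∃ η : Fin 4 → ℝ, (∀ m, η m = 1 ∨ η m = -1) ∧ (∏ m, η m) = s ∧
        ∀ m, w m = η m / 2) ∧ ⟪ε • stdV i + δ • stdV j, w⟫ = 1}
      : Set (EuclideanSpace ℝ (Fin 4))) = {w1, w2} := by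
    ext w
    simp only [Set.mem_setOf_eq, Set.mem_insert_iff, Set.mem_singleton_iff]
    constructor
    · rintro ⟨⟨η, hη, hprodη, hcoord⟩, hinner⟩
      rw [inner_v, hcoord i, hcoord j] at hinner
      have hps : η i * (η j * (η k * η l)) = s := by
        rw [← prod4 i j k l hij hik hil hjk hjl hkl hall η]; exact hprodη
      have hij' : η i = ε ∧ η j = δ := by
        rcases hε with rfl | rfl <;> rcases hδ with rfl | rfl <;>
          rcases hη i with h1 | h1 <;> rcases hη j with h2 | h2 <;>
          rw [h1, h2] at hinner <;> norm_num at hinner <;> exact ⟨h1, h2⟩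
      obtain ⟨hi, hj⟩ := hij'
      rw [hi, hj] at hps
      have hl : η l = s * (ε * δ) * η k := by
        rcases hε with rfl | rfl <;> rcases hδ with rfl | rfl <;>
          rcases hs with rfl | rfl <;> rcases hη k with hk | hk <;>
          rw [hk] at hps ⊢ <;> norm_num at hps ⊢ <;> linarith
      rcases hη k with hk | hk
      · left; ext m
        rw [hcoord m, hw1, sgnVec_apply]
        rcases hall m with rfl | rfl | rfl | rfl
        · simp [sgnFun, hi]
        · simp [sgnFun, hij.symm, hj]
        · simp [sgnFun, hik.symm, hjk.symm, hk]
        · simp only [sgnFun, if_neg hil.symm, if_neg hjl.symm, if_neg hkl.symm]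
          rw [hl, hk]; ring
      · right; ext m
        rw [hcoord m, hw2, sgnVec_apply]
        rcases hall m with rfl | rfl | rfl | rfl
        · simp [sgnFun, hi]
        · simp [sgnFun, hij.symm, hj]
        · simp [sgnFun, hik.symm, hjk.symm, hk]
        · simp only [sgnFun, if_neg hil.symm, if_neg hjl.symm, if_neg hkl.symm]
          rw [hl, hk]; ring
    · have hmem : ∀ c d : ℝ, (c = 1 ∨ c = -1) → (d = 1 ∨ d = -1) →
          ε * (δ * (c * d)) = s →
          (∃ η : Fin 4 → ℝ, (∀ m, η m = 1 ∨ η m = -1) ∧ (∏ m, η m) = s ∧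
            ∀ m, sgnVec i j k ε δ c d m = η m / 2) ∧
            ⟪ε • stdV i + δ • stdV j, sgnVec i j k ε δ c d⟫ = 1 := by
        intro c d hc hd hcd
        refine ⟨⟨sgnFun i j k ε δ c d, ?_, ?_, fun m => rfl⟩, ?_⟩
        · intro m
          simp only [sgnFun]
          split_ifs
          · exact hε
          · exact hδ
          · exact hc
          · exact hd
        · rw [prod4 i j k l hij hik hil hjk hjl hkl hall]
          simp only [sgnFun, if_pos rfl, if_neg hij.symm, if_neg hik.symm, if_neg hjk.symm,
            if_neg hil.symm, if_neg hjl.symm, if_neg hkl.symm]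
          exact hcd
        · rw [inner_v, sgnVec_apply, sgnVec_apply]
          simp only [sgnFun, if_pos rfl, if_neg hij.symm]
          rcases hε with rfl | rfl <;> rcases hδ with rfl | rfl <;> norm_num
      rintro (rfl | rfl)
      · exact hmem 1 (s * (ε * δ)) (Or.inl rfl)
          (by rcases hε with rfl | rfl <;> rcases hδ with rfl | rfl <;>
            rcases hs with rfl | rfl <;> norm_num)
          (by rcases hε with rfl | rfl <;> rcases hδ with rfl | rfl <;> norm_num)
      · exact hmem (-1) (-(s * (ε * δ))) (Or.inr rfl)
          (by rcases hε with rfl | rfl <;> rcases hδ with rfl | rfl <;>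
            rcases hs with rfl | rfl <;> norm_num)
          (by rcases hε with rfl | rfl <;> rcases hδ with rfl | rfl <;> norm_num)
  rw [hset]
  refine Set.ncard_pair ?_
  intro h
  have h2 : w1 k = w2 k := by rw [h]
  rw [hw1, hw2, sgnVec_apply, sgnVec_apply] at h2
  simp only [sgnFun, if_neg hik.symm, if_neg hjk.symm, if_pos rfl] at h2
  norm_num at h2

/-- Every vertex of the 24-cell lies in exactly two facets of each colour. -/
theorem vertex_in_two_facets_of_each_colour (v : EuclideanSpace ℝ (Fin 4)) (hv : v ∈ cellV) :
    ({w ∈ colG | ⟪v, w⟫ = 1}).ncard = 2 ∧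
    ({w ∈ colR | ⟪v, w⟫ = 1}).ncard = 2 ∧
    ({w ∈ colB | ⟪v, w⟫ = 1}).ncard = 2 := by
  obtain ⟨i, j, hij, ε, δ, hε, hδ, rfl⟩ := hv
  obtain ⟨k, l, hik, hil, hjk, hjl, hkl, hall⟩ := exists_compl i j hij
  refine ⟨green_card i j hij ε δ hε hδ, ?_, ?_⟩
  · exact rb_card i j k l hij hik hil hjk hjl hkl hall ε δ 1 hε hδ (Or.inl rfl)
  · exact rb_card i j k l hij hik hil hjk hjl hkl hall ε δ (-1) hε hδ (Or.inr rfl)
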